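/- Let 1/2 < t < 1 and let M₁, M₂ ≥ 2 be natural numbers. For a natural number n₀ ≥ 1 and a real number w, define for 0 ≤ i < M₁ and 0 ≤ j < M₂: n_{i,j} := n₀ + j·M₁ + i, x_{i,j} := w − ∑_{i'=i}^{M₁−1} n_{i',j}^{-t}, y_{i,j} := ∑_{j'=0}^{j−1} n_{i,j'}^{-t}, and S_{i,j} := [x_{i,j}, x_{i,j} + n_{i,j}^{-t}] × [y_{i,j}, y_{i,j} + n_{i,j}^{-t}]. Then there exists a natural number N₀ (depending only on t, M₁, M₂) such that for every n₀ ≥ N₀ and all 0 ≤ i < M₁ − 1, 0 ≤ j < M₂ − 1, the following hold: the identities x_{i+1,j} = x_{i,j} + n_{i,j}^{-t}, y_{i,j+1} = y_{i,j} + n_{i,j}^{-t}, x_{i+1,j+1} = x_{i,j+1} + n_{i,j+1}^{-t}, y_{i+1,j+1} = y_{i+1,j} + n_{i+1,j}^{-t}; the strict inequalities y_{i,j} < y_{i+1,j} + n_{i+1,j}^{-t} < y_{i,j} + n_{i,j}^{-t}, x_{i,j} < x_{i,j+1} < x_{i,j} + n_{i,j}^{-t}, y_{i+1,j+1} < y_{i,j+1}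 < y_{i+1,j+1} + n_{i+1,j+1}^{-t}, x_{i+1,j} < x_{i+1,j+1} < x_{i+1,j} + n_{i+1,j}^{-t}; and the gap rectangle G_{i,j} := [x_{i+1,j}, x_{i+1,j+1}] × [y_{i+1,j+1}, y_{i,j+1}] has both sidelengths at most t·M₁²·M₂²·n₀^{-t-1} and has interior disjoint from the interiors of S_{i,j}, S_{i+1,j}, S_{i,j+1} and S_{i+1,j+1}. -/

import Mathlib

/-!
Within a row the abscissae, and within a column the ordinates, are partial sums of the
sidelengths, so horizontally and vertically consecutive squares abut exactly. Passing from
one row (column) to the next shifts every index by `M₁` (by `1`), and Bernoulli's inequality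
gives `n^{-t} - (n + k)^{-t} ≤ t k n^{-t-1}`; summing at most `M₁` (resp. `M₂`) such defects
bounds both sides of the gap rectangle by `t M₁² M₂² n₀^{-t-1}`. Once `n₀ ≥ 2 M₁² M₂²` this is
less than `n₀^{-t} / 2 ≤ n_{i,j}^{-t}`, which yields the strict inequalities, and each square
is separated from the gap rectangle by one of its sides, which gives the disjointness.
-/

open Set Finset

/-- The lexicographic index `n_{i,j} = n₀ + j M₁ + i`. -/
def nij (n₀ M₁ i j : ℕ) : ℕ := n₀ + j * M₁ + i

/-- The abscissa `x_{i,j} = w - ∑_{i'=i}^{M₁-1} n_{i',j}^{-t}`. -/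
noncomputable def xij (t w : ℝ) (n₀ M₁ i j : ℕ) : ℝ :=
  w - ∑ i' ∈ Finset.Ico i M₁, ((nij n₀ M₁ i' j : ℕ) : ℝ) ^ (-t)

/-- The ordinate `y_{i,j} = ∑_{j'=0}^{j-1} n_{i,j'}^{-t}`. -/
noncomputable def yij (t : ℝ) (n₀ M₁ i j : ℕ) : ℝ :=
  ∑ j' ∈ Finset.range j, ((nij n₀ M₁ i j' : ℕ) : ℝ) ^ (-t)

/-- The square `S_{i,j}` of sidelength `n_{i,j}^{-t}` with bottom-left corner
`(x_{i,j}, y_{i,j})`. -/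
def Sij (t w : ℝ) (n₀ M₁ i j : ℕ) : Set (ℝ × ℝ) :=
  Set.Icc (xij t w n₀ M₁ i j) (xij t w n₀ M₁ i j + ((nij n₀ M₁ i j : ℕ) : ℝ) ^ (-t)) ×ˢ
  Set.Icc (yij t n₀ M₁ i j) (yij t n₀ M₁ i j + ((nij n₀ M₁ i j : ℕ) : ℝ) ^ (-t))

/-- The gap rectangle `G_{i,j} = [x_{i+1,j}, x_{i+1,j+1}] × [y_{i+1,j+1}, y_{i,j+1}]`
surrounded by the four squares `S_{i,j}, S_{i+1,j}, S_{i,j+1}, S_{i+1,j+1}`. -/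
def Gij (t w : ℝ) (n₀ M₁ i j : ℕ) : Set (ℝ × ℝ) :=
  Set.Icc (xij t w n₀ M₁ (i + 1) j) (xij t w n₀ M₁ (i + 1) (j + 1)) ×ˢ
  Set.Icc (yij t n₀ M₁ (i + 1) (j + 1)) (yij t n₀ M₁ i (j + 1))

lemma rpow_neg_sub_rpow_neg_le {t x k : ℝ} (ht₀ : 0 ≤ t) (ht₁ : t ≤ 1) (hx : 0 < x)
    (hk : 0 ≤ k) : x ^ (-t) - (x + k) ^ (-t) ≤ t * k * x ^ (-t - 1) := by
  set u := k / x with hu_def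
  have hu : 0 ≤ u := div_nonneg hk hx.le
  have hu₁ : 0 < 1 + u := by linarith
  have bernoulli : (1 + u) ^ t ≤ 1 + t * u :=
    rpow_one_add_le_one_add_mul_self (by linarith) ht₀ ht₁
  have hlow : 1 - t * u ≤ (1 + u) ^ (-t) := by
    have htu : 0 ≤ t * u := mul_nonneg ht₀ hu
    calc 1 - t * u ≤ (1 + t * u)⁻¹ := by
          rw [← one_div, le_div_iff₀ (by linarith)]; nlinarith
      _ ≤ ((1 + u) ^ t)⁻¹ := inv_anti₀ (by positivity) bernoulli
      _ = (1 + u) ^ (-t) := (Real.rpow_neg hu₁.le t).symm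
  have hxk : x + k = x * (1 + u) := by rw [hu_def]; field_simp
  calc x ^ (-t) - (x + k) ^ (-t) = x ^ (-t) * (1 - (1 + u) ^ (-t)) := by
        rw [hxk, Real.mul_rpow hx.le hu₁.le]; ring
    _ ≤ x ^ (-t) * (t * u) := by gcongr; linarith
    _ = t * k * x ^ (-t - 1) := by
        rw [Real.rpow_sub_one hx.ne', hu_def]; field_simp

lemma natCast_rpow_neg_sub_le {t : ℝ} (ht₀ : 0 ≤ t) (ht₁ : t ≤ 1) {n₀ m : ℕ} (hn₀ : 0 < n₀)
    (hm : n₀ ≤ m) (k : ℕ) :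
    (m : ℝ) ^ (-t) - ((m + k : ℕ) : ℝ) ^ (-t) ≤ t * k * (n₀ : ℝ) ^ (-t - 1) := by
  have hn₀' : (0 : ℝ) < n₀ := by exact_mod_cast hn₀
  have hm' : (n₀ : ℝ) ≤ m := by exact_mod_cast hm
  calc (m : ℝ) ^ (-t) - ((m + k : ℕ) : ℝ) ^ (-t)
      ≤ t * k * (m : ℝ) ^ (-t - 1) := by
        push_cast
        exact rpow_neg_sub_rpow_neg_le ht₀ ht₁ (hn₀'.trans_le hm') k.cast_nonneg
    _ ≤ t * k * (n₀ : ℝ) ^ (-t - 1) :=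
        mul_le_mul_of_nonneg_left (Real.rpow_le_rpow_of_nonpos hn₀' hm' (by linarith))
          (by positivity)

lemma natCast_rpow_neg_sub_pos {t : ℝ} (ht : 0 < t) {m k : ℕ} (hm : 0 < m) (hk : 0 < k) :
    0 < (m : ℝ) ^ (-t) - ((m + k : ℕ) : ℝ) ^ (-t) :=
  sub_pos.2 <| Real.rpow_lt_rpow_of_neg (by exact_mod_cast hm) (by exact_mod_cast by omega)
    (by linarith)

lemma rpow_neg_div_two_le {t x y : ℝ} (ht₀ : 0 ≤ t) (ht₁ : t ≤ 1) (hx : 0 < x) (hy : 0 < y)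
    (hyx : y ≤ 2 * x) : x ^ (-t) / 2 ≤ y ^ (-t) :=
  calc x ^ (-t) / 2 = (2 : ℝ) ^ (-1 : ℝ) * x ^ (-t) := by rw [Real.rpow_neg_one]; ring
    _ ≤ (2 : ℝ) ^ (-t) * x ^ (-t) := by gcongr; linarith
    _ = (2 * x) ^ (-t) := (Real.mul_rpow zero_le_two hx.le).symm
    _ ≤ y ^ (-t) := Real.rpow_le_rpow_of_nonpos hy hyx (by linarith)

lemma mul_rpow_neg_sub_one_lt_div_two {t a x : ℝ} (hx : 0 < x) (ha : 2 * a < x) :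
    a * x ^ (-t - 1) < x ^ (-t) / 2 := by
  have hpos : 0 < x ^ (-t) := Real.rpow_pos_of_pos hx _
  rw [Real.rpow_sub_one hx.ne', mul_div_assoc', div_lt_div_iff₀ hx two_pos]
  nlinarith

section Interior

variable {α β : Type*} [TopologicalSpace α] [TopologicalSpace β]

lemma disjoint_interior_prod_of_left {s₁ s₂ : Set α} (t₁ t₂ : Set β)
    (h : Disjoint (interior s₁) (interior s₂)) :
    Disjoint (interior (s₁ ×ˢ t₁)) (interior (s₂ ×ˢ t₂)) := by
  rw [interior_prod_eq, interior_prod_eq]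
  exact h.set_prod_left _ _

lemma disjoint_interior_prod_of_right (s₁ s₂ : Set α) {t₁ t₂ : Set β}
    (h : Disjoint (interior t₁) (interior t₂)) :
    Disjoint (interior (s₁ ×ˢ t₁)) (interior (s₂ ×ˢ t₂)) := by
  rw [interior_prod_eq, interior_prod_eq]
  exact h.set_prod_right _ _

lemma disjoint_interior_Icc_of_le [LinearOrder α] [OrderTopology α] [DenselyOrdered α]
    [NoMinOrder α] [NoMaxOrder α] {a₁ b₁ a₂ b₂ : α} (h : b₁ ≤ a₂) :
    Disjoint (interior (Icc a₁ b₁)) (interior (Icc a₂ b₂)) := by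
  rw [interior_Icc, interior_Icc]
  exact Set.disjoint_left.2 fun x h₁ h₂ ↦ (h₁.2.trans_le h).not_gt h₂.1

end Interior

section Packing

variable (t w : ℝ) (n₀ M₁ : ℕ) {i j : ℕ}

lemma nij_succ_left : nij n₀ M₁ (i + 1) j = nij n₀ M₁ i j + 1 := rfl

lemma nij_succ_right : nij n₀ M₁ i (j + 1) = nij n₀ M₁ i j + M₁ := by
  unfold nij; ring

lemma le_nij : n₀ ≤ nij n₀ M₁ i j := by
  unfold nij; omega

lemma xij_succ_left (hi : i < M₁) :
    xij t w n₀ M₁ (i + 1) j = xij t w n₀ M₁ i j + ((nij n₀ M₁ i j : ℕ) : ℝ) ^ (-t) := by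
  unfold xij
  rw [Finset.sum_eq_sum_Ico_succ_bot hi]
  ring

lemma yij_succ_right :
    yij t n₀ M₁ i (j + 1) = yij t n₀ M₁ i j + ((nij n₀ M₁ i j : ℕ) : ℝ) ^ (-t) :=
  Finset.sum_range_succ _ _

lemma yij_sub_yij_succ_left :
    yij t n₀ M₁ i j - yij t n₀ M₁ (i + 1) j = ∑ j' ∈ range j,
      (((nij n₀ M₁ i j' : ℕ) : ℝ) ^ (-t) - ((nij n₀ M₁ i j' + 1 : ℕ) : ℝ) ^ (-t)) := by
  simp only [yij, nij_succ_left, Finset.sum_sub_distrib]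

lemma xij_succ_right_sub_xij :
    xij t w n₀ M₁ i (j + 1) - xij t w n₀ M₁ i j = ∑ i' ∈ Ico i M₁,
      (((nij n₀ M₁ i' j : ℕ) : ℝ) ^ (-t) - ((nij n₀ M₁ i' j + M₁ : ℕ) : ℝ) ^ (-t)) := by
  unfold xij
  simp only [nij_succ_right, Finset.sum_sub_distrib]
  ring

variable {t w n₀ M₁} {M₂ : ℕ}

lemma yij_succ_left_lt (ht : 0 < t) (hn₀ : 0 < n₀) (hj : 0 < j) :
    yij t n₀ M₁ (i + 1) j < yij t n₀ M₁ i j := by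
  rw [← sub_pos, yij_sub_yij_succ_left]
  exact Finset.sum_pos (fun j' _ ↦ natCast_rpow_neg_sub_pos ht (hn₀.trans_le (le_nij ..))
    one_pos) ⟨0, Finset.mem_range.2 hj⟩

lemma xij_lt_xij_succ_right (ht : 0 < t) (hn₀ : 0 < n₀) (hi : i < M₁) :
    xij t w n₀ M₁ i j < xij t w n₀ M₁ i (j + 1) := by
  rw [← sub_pos, xij_succ_right_sub_xij]
  exact Finset.sum_pos (fun i' _ ↦ natCast_rpow_neg_sub_pos ht (hn₀.trans_le (le_nij ..))
    (by omega)) ⟨i, Finset.mem_Ico.2 ⟨le_rfl, hi⟩⟩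

lemma yij_sub_yij_succ_left_le (ht₀ : 0 ≤ t) (ht₁ : t ≤ 1) (hn₀ : 0 < n₀) (hM₁ : 0 < M₁)
    (hj : j ≤ M₂) :
    yij t n₀ M₁ i j - yij t n₀ M₁ (i + 1) j ≤ t * M₁ ^ 2 * M₂ ^ 2 * (n₀ : ℝ) ^ (-t - 1) := by
  have hjM : j ≤ M₁ ^ 2 * M₂ ^ 2 :=
    hj.trans <| (Nat.le_self_pow two_ne_zero M₂).trans (Nat.le_mul_of_pos_left _ (by positivity))
  rw [yij_sub_yij_succ_left]
  calc _ ≤ ∑ _j' ∈ range j, t * (1 : ℕ) * (n₀ : ℝ) ^ (-t - 1) :=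
        Finset.sum_le_sum fun j' _ ↦ natCast_rpow_neg_sub_le ht₀ ht₁ hn₀ (le_nij ..) 1
    _ = j * (t * (n₀ : ℝ) ^ (-t - 1)) := by
        rw [Finset.sum_const, Finset.card_range, nsmul_eq_mul, Nat.cast_one, mul_one]
    _ ≤ (M₁ ^ 2 * M₂ ^ 2 : ℕ) * (t * (n₀ : ℝ) ^ (-t - 1)) := by gcongr
    _ = t * M₁ ^ 2 * M₂ ^ 2 * (n₀ : ℝ) ^ (-t - 1) := by push_cast; ring

lemma xij_succ_right_sub_xij_le (ht₀ : 0 ≤ t) (ht₁ : t ≤ 1) (hn₀ : 0 < n₀) (hM₂ : 0 < M₂) :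
    xij t w n₀ M₁ i (j + 1) - xij t w n₀ M₁ i j ≤ t * M₁ ^ 2 * M₂ ^ 2 * (n₀ : ℝ) ^ (-t - 1) := by
  have hiM : M₁ - i ≤ M₁ * M₂ ^ 2 :=
    (Nat.sub_le M₁ i).trans (Nat.le_mul_of_pos_right _ (by positivity))
  rw [xij_succ_right_sub_xij]
  calc _ ≤ ∑ _i' ∈ Ico i M₁, t * M₁ * (n₀ : ℝ) ^ (-t - 1) :=
        Finset.sum_le_sum fun i' _ ↦ natCast_rpow_neg_sub_le ht₀ ht₁ hn₀ (le_nij ..) M₁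
    _ = (M₁ - i : ℕ) * (t * M₁ * (n₀ : ℝ) ^ (-t - 1)) := by
        rw [Finset.sum_const, Nat.card_Ico, nsmul_eq_mul]
    _ ≤ (M₁ * M₂ ^ 2 : ℕ) * (t * M₁ * (n₀ : ℝ) ^ (-t - 1)) := by gcongr
    _ = t * M₁ ^ 2 * M₂ ^ 2 * (n₀ : ℝ) ^ (-t - 1) := by push_cast; ring

lemma gapBound_lt_rpow_neg_nij (ht₀ : 0 < t) (ht₁ : t < 1) (hi : i < M₁) (hj : j < M₂)
    (hn₀ : 2 * M₁ ^ 2 * M₂ ^ 2 ≤ n₀) :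
    t * M₁ ^ 2 * M₂ ^ 2 * (n₀ : ℝ) ^ (-t - 1) < ((nij n₀ M₁ i j : ℕ) : ℝ) ^ (-t) := by
  have hM : 0 < M₁ * M₂ := Nat.mul_pos (by omega) (by omega)
  have hMsq : M₁ * M₂ ≤ M₁ ^ 2 * M₂ ^ 2 := by nlinarith
  have hnij : nij n₀ M₁ i j ≤ 2 * n₀ := by
    have hjM : j * M₁ + i < M₁ * M₂ := by nlinarith
    unfold nij; linarith
  have hn₀' : (2 : ℝ) * M₁ ^ 2 * M₂ ^ 2 ≤ n₀ := by exact_mod_cast hn₀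
  have hM' : (1 : ℝ) ≤ M₁ ^ 2 * M₂ ^ 2 := by exact_mod_cast hM.trans_le hMsq
  have hn₀pos : (0 : ℝ) < n₀ := by linarith
  calc t * M₁ ^ 2 * M₂ ^ 2 * (n₀ : ℝ) ^ (-t - 1) < (n₀ : ℝ) ^ (-t) / 2 :=
        mul_rpow_neg_sub_one_lt_div_two hn₀pos (by nlinarith)
    _ ≤ ((nij n₀ M₁ i j : ℕ) : ℝ) ^ (-t) :=
        rpow_neg_div_two_le ht₀.le ht₁.le hn₀pos
          (hn₀pos.trans_le (by exact_mod_cast le_nij ..)) (by exact_mod_cast hnij)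

end Packing

theorem adjacency_relations_general (t : ℝ) (ht1 : 1 / 2 < t) (ht2 : t < 1)
    (M₁ M₂ : ℕ) :
    ∃ N₀ : ℕ, ∀ (n₀ : ℕ) (w : ℝ), N₀ ≤ n₀ →
      ∀ i j : ℕ, i + 1 < M₁ → j + 1 < M₂ →
        -- identities
        (xij t w n₀ M₁ (i + 1) j =
          xij t w n₀ M₁ i j + ((nij n₀ M₁ i j : ℕ) : ℝ) ^ (-t)) ∧
        (yij t n₀ M₁ i (j + 1) =
          yij t n₀ M₁ i j + ((nij n₀ M₁ i j : ℕ) : ℝ) ^ (-t)) ∧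
        (xij t w n₀ M₁ (i + 1) (j + 1) =
          xij t w n₀ M₁ i (j + 1) + ((nij n₀ M₁ i (j + 1) : ℕ) : ℝ) ^ (-t)) ∧
        (yij t n₀ M₁ (i + 1) (j + 1) =
          yij t n₀ M₁ (i + 1) j + ((nij n₀ M₁ (i + 1) j : ℕ) : ℝ) ^ (-t)) ∧
        -- strict inequalities
        (yij t n₀ M₁ i j <
          yij t n₀ M₁ (i + 1) j + ((nij n₀ M₁ (i + 1) j : ℕ) : ℝ) ^ (-t)) ∧
        (yij t n₀ M₁ (i + 1) j + ((nij n₀ M₁ (i + 1) j : ℕ) : ℝ) ^ (-t) <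
          yij t n₀ M₁ i j + ((nij n₀ M₁ i j : ℕ) : ℝ) ^ (-t)) ∧
        (xij t w n₀ M₁ i j < xij t w n₀ M₁ i (j + 1)) ∧
        (xij t w n₀ M₁ i (j + 1) <
          xij t w n₀ M₁ i j + ((nij n₀ M₁ i j : ℕ) : ℝ) ^ (-t)) ∧
        (yij t n₀ M₁ (i + 1) (j + 1) < yij t n₀ M₁ i (j + 1)) ∧
        (yij t n₀ M₁ i (j + 1) <
          yij t n₀ M₁ (i + 1) (j + 1) +
            ((nij n₀ M₁ (i + 1) (j + 1) : ℕ) : ℝ) ^ (-t)) ∧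
        (xij t w n₀ M₁ (i + 1) j < xij t w n₀ M₁ (i + 1) (j + 1)) ∧
        (xij t w n₀ M₁ (i + 1) (j + 1) <
          xij t w n₀ M₁ (i + 1) j + ((nij n₀ M₁ (i + 1) j : ℕ) : ℝ) ^ (-t)) ∧
        -- smallness of the gap rectangle
        (xij t w n₀ M₁ (i + 1) (j + 1) - xij t w n₀ M₁ (i + 1) j ≤
          t * (M₁ : ℝ) ^ 2 * (M₂ : ℝ) ^ 2 * (n₀ : ℝ) ^ (-t - 1)) ∧
        (yij t n₀ M₁ i (j + 1) - yij t n₀ M₁ (i + 1) (j + 1) ≤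
          t * (M₁ : ℝ) ^ 2 * (M₂ : ℝ) ^ 2 * (n₀ : ℝ) ^ (-t - 1)) ∧
        -- the gap rectangle has interior disjoint from the four squares
        Disjoint (interior (Gij t w n₀ M₁ i j)) (interior (Sij t w n₀ M₁ i j)) ∧
        Disjoint (interior (Gij t w n₀ M₁ i j)) (interior (Sij t w n₀ M₁ (i + 1) j)) ∧
        Disjoint (interior (Gij t w n₀ M₁ i j)) (interior (Sij t w n₀ M₁ i (j + 1))) ∧
        Disjoint (interior (Gij t w n₀ M₁ i j))
          (interior (Sij t w n₀ M₁ (i + 1) (j + 1))) := by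
  have ht : 0 < t := by linarith
  refine ⟨2 * M₁ ^ 2 * M₂ ^ 2, fun n₀ w hn₀ i j hi hj ↦ ?_⟩
  have hn₀pos : 0 < n₀ := by
    have : 0 < M₁ * M₂ := Nat.mul_pos (by omega) (by omega)
    nlinarith
  have hside : ∀ i j, i < M₁ → j < M₂ →
      t * M₁ ^ 2 * M₂ ^ 2 * (n₀ : ℝ) ^ (-t - 1) < ((nij n₀ M₁ i j : ℕ) : ℝ) ^ (-t) :=
    fun _ _ hi hj ↦ gapBound_lt_rpow_neg_nij ht ht2 hi hj hn₀
  have hxgap : ∀ i, xij t w n₀ M₁ i (j + 1) - xij t w n₀ M₁ i j ≤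
      t * M₁ ^ 2 * M₂ ^ 2 * (n₀ : ℝ) ^ (-t - 1) := fun i ↦
    xij_succ_right_sub_xij_le ht.le ht2.le hn₀pos (by omega)
  have hygap : ∀ j ≤ M₂, yij t n₀ M₁ i j - yij t n₀ M₁ (i + 1) j ≤
      t * M₁ ^ 2 * M₂ ^ 2 * (n₀ : ℝ) ^ (-t - 1) := fun j hj ↦
    yij_sub_yij_succ_left_le ht.le ht2.le hn₀pos (by omega) hj
  refine ⟨xij_succ_left t w n₀ M₁ (by omega), yij_succ_right t n₀ M₁,
    xij_succ_left t w n₀ M₁ (by omega), yij_succ_right t n₀ M₁, ?_, ?_,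
    xij_lt_xij_succ_right ht hn₀pos (by omega), ?_, yij_succ_left_lt ht hn₀pos j.succ_pos, ?_,
    xij_lt_xij_succ_right ht hn₀pos hi, ?_, hxgap (i + 1), hygap (j + 1) hj.le, ?_, ?_, ?_, ?_⟩
  · linarith [hside (i + 1) j hi (by omega), hygap j (by omega)]
  · rw [← yij_succ_right, ← yij_succ_right]
    exact yij_succ_left_lt ht hn₀pos j.succ_pos
  · linarith [hside i j (by omega) (by omega), hxgap i]
  · linarith [hside (i + 1) (j + 1) hi hj, hygap (j + 1) hj.le]
  · linarith [hside (i + 1) j hi (by omega), hxgap (i + 1)]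
  · exact (disjoint_interior_prod_of_left _ _
      (disjoint_interior_Icc_of_le (xij_succ_left t w n₀ M₁ (by omega)).ge)).symm
  · exact (disjoint_interior_prod_of_right _ _
      (disjoint_interior_Icc_of_le (yij_succ_right t n₀ M₁).ge)).symm
  · exact disjoint_interior_prod_of_right _ _ (disjoint_interior_Icc_of_le le_rfl)
  · exact disjoint_interior_prod_of_left _ _ (disjoint_interior_Icc_of_le le_rfl)

/-- Adjacency relations among the four squares `S_{i,j}, S_{i+1,j}, S_{i,j+1},
S_{i+1,j+1}` of the near-lattice packing, and the smallness of the gap rectangle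
they surround. -/
theorem adjacency_relations (t : ℝ) (ht1 : 1 / 2 < t) (ht2 : t < 1)
    (M₁ M₂ : ℕ) (hM₁ : 2 ≤ M₁) (hM₂ : 2 ≤ M₂) :
    ∃ N₀ : ℕ, ∀ (n₀ : ℕ) (w : ℝ), N₀ ≤ n₀ →
      ∀ i j : ℕ, i + 1 < M₁ → j + 1 < M₂ →
        -- identities
        (xij t w n₀ M₁ (i + 1) j =
          xij t w n₀ M₁ i j + ((nij n₀ M₁ i j : ℕ) : ℝ) ^ (-t)) ∧
        (yij t n₀ M₁ i (j + 1) =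
          yij t n₀ M₁ i j + ((nij n₀ M₁ i j : ℕ) : ℝ) ^ (-t)) ∧
        (xij t w n₀ M₁ (i + 1) (j + 1) =
          xij t w n₀ M₁ i (j + 1) + ((nij n₀ M₁ i (j + 1) : ℕ) : ℝ) ^ (-t)) ∧
        (yij t n₀ M₁ (i + 1) (j + 1) =
          yij t n₀ M₁ (i + 1) j + ((nij n₀ M₁ (i + 1) j : ℕ) : ℝ) ^ (-t)) ∧
        -- strict inequalities
        (yij t n₀ M₁ i j <
          yij t n₀ M₁ (i + 1) j + ((nij n₀ M₁ (i + 1) j : ℕ) : ℝ) ^ (-t)) ∧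
        (yij t n₀ M₁ (i + 1) j + ((nij n₀ M₁ (i + 1) j : ℕ) : ℝ) ^ (-t) <
          yij t n₀ M₁ i j + ((nij n₀ M₁ i j : ℕ) : ℝ) ^ (-t)) ∧
        (xij t w n₀ M₁ i j < xij t w n₀ M₁ i (j + 1)) ∧
        (xij t w n₀ M₁ i (j + 1) <
          xij t w n₀ M₁ i j + ((nij n₀ M₁ i j : ℕ) : ℝ) ^ (-t)) ∧
        (yij t n₀ M₁ (i + 1) (j + 1) < yij t n₀ M₁ i (j + 1)) ∧
        (yij t n₀ M₁ i (j + 1) <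
          yij t n₀ M₁ (i + 1) (j + 1) +
            ((nij n₀ M₁ (i + 1) (j + 1) : ℕ) : ℝ) ^ (-t)) ∧
        (xij t w n₀ M₁ (i + 1) j < xij t w n₀ M₁ (i + 1) (j + 1)) ∧
        (xij t w n₀ M₁ (i + 1) (j + 1) <
          xij t w n₀ M₁ (i + 1) j + ((nij n₀ M₁ (i + 1) j : ℕ) : ℝ) ^ (-t)) ∧
        -- smallness of the gap rectangle
        (xij t w n₀ M₁ (i + 1) (j + 1) - xij t w n₀ M₁ (i + 1) j ≤
          t * (M₁ : ℝ) ^ 2 * (M₂ : ℝ) ^ 2 * (n₀ : ℝ) ^ (-t - 1)) ∧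
        (yij t n₀ M₁ i (j + 1) - yij t n₀ M₁ (i + 1) (j + 1) ≤
          t * (M₁ : ℝ) ^ 2 * (M₂ : ℝ) ^ 2 * (n₀ : ℝ) ^ (-t - 1)) ∧
        -- the gap rectangle has interior disjoint from the four squares
        Disjoint (interior (Gij t w n₀ M₁ i j)) (interior (Sij t w n₀ M₁ i j)) ∧
        Disjoint (interior (Gij t w n₀ M₁ i j)) (interior (Sij t w n₀ M₁ (i + 1) j)) ∧
        Disjoint (interior (Gij t w n₀ M₁ i j)) (interior (Sij t w n₀ M₁ i (j + 1))) ∧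
        Disjoint (interior (Gij t w n₀ M₁ i j))
          (interior (Sij t w n₀ M₁ (i + 1) (j + 1))) :=
  adjacency_relations_general t ht1 ht2 M₁ M₂
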